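/- arXiv:1206.4416 — 2 statements merged into one kernel-verified Lean document; each statement's English description precedes it below -/
import Mathlib

section
/- There do not exist proper doubly warped product submanifolds M = _{f₂}N₁ ×_{f₁} N₂ of a Kenmotsu manifold M̃ (with ξ tangent to M): if ξ is tangent to N₁, then f₂ is constant, and if ξ is tangent to N₂, then f₁ is constant. Hence every such doubly warped product is a (single) warped product. -/
/-!
Compatibility of the metric with the almost contact structure makes `ξ` a unit vector with
`g X ξ = η X`. For `U` tangent, the Kenmotsu identity `∇̃_U ξ = U − η(U) ξ` is therefore
orthogonal to `ξ`, and since the second fundamental form is normal, so is `∇_U ξ`.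
On a doubly warped product with `ξ ∈ TN₁` and `Z ∈ TN₂` one has
`∇_Z ξ = (ξ ln f₁) Z + (Z ln f₂) ξ`, whose `ξ`-component is `Z ln f₂`; hence `f₂` is constant.
The case `ξ ∈ TN₂` is symmetric.
-/

section KenmotsuSubmanifold

variable {V : Type*} [AddCommGroup V] [Module ℝ V] {g : V →ₗ[ℝ] V →ₗ[ℝ] ℝ} {ξ : V}
  {η : V →ₗ[ℝ] ℝ}

theorem apply_reeb_eq_contactForm {φ : V →ₗ[ℝ] V} (hηξ : η ξ = 1) (hφξ : φ ξ = 0)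
    (hcompat : ∀ X Y : V, g (φ X) (φ Y) = g X Y - η X * η Y) (X : V) : g X ξ = η X := by
  have h := hcompat X ξ
  rw [hφξ, hηξ, map_zero] at h
  linarith

theorem apply_nabla_reeb_reeb_eq_zero (hgsym : ∀ X Y : V, g X Y = g Y X)
    (hgξ : ∀ X : V, g X ξ = η X) (hηξ : η ξ = 1) {TM TMp : Submodule ℝ V}
    (horth : ∀ x ∈ TM, ∀ y ∈ TMp, g x y = 0) {nablaA nabla h2 : V → V → V}
    (hGauss : ∀ X ∈ TM, ∀ Y ∈ TM, nablaA X Y = nabla X Y + h2 X Y)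
    (hh2nor : ∀ X ∈ TM, ∀ Y ∈ TM, h2 X Y ∈ TMp)
    (hKenξ : ∀ X ∈ TM, nablaA X ξ = X - η X • ξ) (hξTM : ξ ∈ TM) {U : V} (hU : U ∈ TM) :
    g (nabla U ξ) ξ = 0 := by
  have hnormal : g (h2 U ξ) ξ = 0 := by
    rw [hgsym]
    exact horth ξ hξTM _ (hh2nor U hU ξ hξTM)
  have hambient : g (nablaA U ξ) ξ = 0 := by
    rw [hKenξ U hU, map_sub, map_smul, LinearMap.sub_apply, LinearMap.smul_apply, hgξ, hgξ,
      hηξ, smul_eq_mul, mul_one, sub_self]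
  rw [hGauss U hU ξ hξTM, map_add, LinearMap.add_apply, hnormal, add_zero] at hambient
  exact hambient

end KenmotsuSubmanifold

theorem stmt6_general
    {V : Type*} [AddCommGroup V] [Module ℝ V]
    -- the metric g (symmetric, positive definite) on the ambient manifold M̃
    (g : V →ₗ[ℝ] V →ₗ[ℝ] ℝ)
    (hgsym : ∀ X Y : V, g X Y = g Y X)
    -- almost contact structure (φ, ξ, η)
    (φ : V →ₗ[ℝ] V) (ξ : V) (η : V →ₗ[ℝ] ℝ)
    (hηξ : η ξ = 1)
    (hφξ : φ ξ = 0)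
    (hcompat : ∀ X Y : V, g (φ X) (φ Y) = g X Y - η X * η Y)
    -- the submanifold M : tangent bundle TM, normal bundle TMp
    (TM TMp : Submodule ℝ V)
    (horth : ∀ x ∈ TM, ∀ y ∈ TMp, g x y = 0)
    -- ambient connection ∇̃, induced connection ∇, second fundamental form h
    (nablaA nabla h2 : V → V → V)
    (hGauss : ∀ X ∈ TM, ∀ Y ∈ TM, nablaA X Y = nabla X Y + h2 X Y)
    (hh2nor : ∀ X ∈ TM, ∀ Y ∈ TM, h2 X Y ∈ TMp)
    -- Kenmotsu manifold: ∇̃_X ξ = X − η(X)ξ for X tangent to M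
    (hKenξ : ∀ X ∈ TM, nablaA X ξ = X - η X • ξ)
    -- doubly warped product M = _{f₂}N₁ ×_{f₁} N₂ :
    -- D₁ = TN₁, D₂ = TN₂, Dlnf1 X = X(ln f₁), Dlnf2 Z = Z(ln f₂)
    (D₁ D₂ : Submodule ℝ V)
    (hD₁ : D₁ ≤ TM) (hD₂ : D₂ ≤ TM)
    (hD₁D₂ : ∀ X ∈ D₁, ∀ Z ∈ D₂, g X Z = 0)
    (Dlnf1 Dlnf2 : V →ₗ[ℝ] ℝ)
    (hdwarp : ∀ X ∈ D₁, ∀ Z ∈ D₂,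
      nabla X Z = Dlnf1 X • Z + Dlnf2 Z • X ∧
      nabla Z X = Dlnf1 X • Z + Dlnf2 Z • X)
    (hξTM : ξ ∈ TM)
    : (ξ ∈ D₁ → ∀ Z ∈ D₂, Dlnf2 Z = 0) ∧
      (ξ ∈ D₂ → ∀ X ∈ D₁, Dlnf1 X = 0) := by
  have hgξ := apply_reeb_eq_contactForm hηξ hφξ hcompat
  have hξξ : g ξ ξ = 1 := (hgξ ξ).trans hηξ
  have hvert : ∀ U ∈ TM, g (nabla U ξ) ξ = 0 := fun U hU =>
    apply_nabla_reeb_reeb_eq_zero hgsym hgξ hηξ horth hGauss hh2nor hKenξ hξTM hU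
  constructor
  · intro hξD₁ Z hZ
    have hZξ : g Z ξ = 0 := by rw [hgsym]; exact hD₁D₂ ξ hξD₁ Z hZ
    simpa [(hdwarp ξ hξD₁ Z hZ).2, hZξ, hξξ] using hvert Z (hD₂ hZ)
  · intro hξD₂ X hX
    simpa [(hdwarp X hX ξ hξD₂).1, hD₁D₂ X hX ξ hξD₂, hξξ] using hvert X (hD₁ hX)

/-- there are no proper doubly warped product submanifolds of a
Kenmotsu manifold: if `ξ ∈ TN₁` then `f₂` is constant, and if `ξ ∈ TN₂`
then `f₁` is constant. -/
theorem stmt6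
    {V : Type*} [AddCommGroup V] [Module ℝ V]
    -- the metric g (symmetric, positive definite) on the ambient manifold M̃
    (g : V →ₗ[ℝ] V →ₗ[ℝ] ℝ)
    (hgsym : ∀ X Y : V, g X Y = g Y X)
    (hgpos : ∀ X : V, X ≠ 0 → 0 < g X X)
    -- almost contact structure (φ, ξ, η)
    (φ : V →ₗ[ℝ] V) (ξ : V) (η : V →ₗ[ℝ] ℝ)
    (hφsq : ∀ X : V, φ (φ X) = X - η X • ξ)
    (hηξ : η ξ = 1)
    (hηφ : ∀ X : V, η (φ X) = 0)
    (hφξ : φ ξ = 0)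
    (hcompat : ∀ X Y : V, g (φ X) (φ Y) = g X Y - η X * η Y)
    -- the submanifold M : tangent bundle TM, normal bundle TMp
    (TM TMp : Submodule ℝ V)
    (horth : ∀ x ∈ TM, ∀ y ∈ TMp, g x y = 0)
    -- ambient connection ∇̃, induced connection ∇, second fundamental form h
    (nablaA nabla h2 : V → V → V)
    (hGauss : ∀ X ∈ TM, ∀ Y ∈ TM, nablaA X Y = nabla X Y + h2 X Y)
    (hnablatan : ∀ X ∈ TM, ∀ Y ∈ TM, nabla X Y ∈ TM)
    (hh2nor : ∀ X ∈ TM, ∀ Y ∈ TM, h2 X Y ∈ TMp)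
    (hh2sym : ∀ X Y : V, h2 X Y = h2 Y X)
    -- Kenmotsu manifold: ∇̃_X ξ = X − η(X)ξ for X tangent to M
    (hKenξ : ∀ X ∈ TM, nablaA X ξ = X - η X • ξ)
    -- doubly warped product M = _{f₂}N₁ ×_{f₁} N₂ :
    -- D₁ = TN₁, D₂ = TN₂, Dlnf1 X = X(ln f₁), Dlnf2 Z = Z(ln f₂)
    (D₁ D₂ : Submodule ℝ V)
    (hD₁ : D₁ ≤ TM) (hD₂ : D₂ ≤ TM)
    (hD₁D₂ : ∀ X ∈ D₁, ∀ Z ∈ D₂, g X Z = 0)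
    (Dlnf1 Dlnf2 : V →ₗ[ℝ] ℝ)
    (hdwarp : ∀ X ∈ D₁, ∀ Z ∈ D₂,
      nabla X Z = Dlnf1 X • Z + Dlnf2 Z • X ∧
      nabla Z X = Dlnf1 X • Z + Dlnf2 Z • X)
    (hξTM : ξ ∈ TM)
    : (ξ ∈ D₁ → ∀ Z ∈ D₂, Dlnf2 Z = 0) ∧
      (ξ ∈ D₂ → ∀ X ∈ D₁, Dlnf1 X = 0) :=
  stmt6_general g hgsym φ ξ η hηξ hφξ hcompat TM TMp horth nablaA nabla h2 hGauss hh2nor hKenξ D₁ D₂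
    hD₁ hD₂ hD₁D₂ Dlnf1 Dlnf2 hdwarp hξTM
end

section
/- There do not exist nontrivial warped product submanifolds M = N₁ ×_f N₂ of a Kenmotsu manifold M̃ with the structure vector field ξ tangent to the second factor N₂: if ξ ∈ TN₂ then f is constant. -/
/-!
For `X` tangent to `N₁`, the warping formula gives `∇_X ξ = (X ln f) ξ`, so `X ln f = g(∇_X ξ, ξ)`
since `ξ` is a unit vector. By the Gauss formula this equals `g(∇̃_X ξ, ξ)`, and the Kenmotsu
condition `∇̃_X ξ = X − η(X) ξ` makes it `η(X) − η(X) = 0`.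
-/

section AlmostContactMetric

variable {V : Type*} [AddCommGroup V] [Module ℝ V]
  (g : V →ₗ[ℝ] V →ₗ[ℝ] ℝ) (φ : V →ₗ[ℝ] V) (ξ : V) (η : V →ₗ[ℝ] ℝ)

theorem metric_reeb_left_eq (hηξ : η ξ = 1) (hφξ : φ ξ = 0)
    (hcompat : ∀ X Y : V, g (φ X) (φ Y) = g X Y - η X * η Y) (X : V) :
    g ξ X = η X := by
  have h := hcompat ξ X
  rw [hφξ, map_zero, LinearMap.zero_apply, hηξ, one_mul] at h
  linarith

theorem metric_reeb_reeb (hηξ : η ξ = 1) (hφξ : φ ξ = 0)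
    (hcompat : ∀ X Y : V, g (φ X) (φ Y) = g X Y - η X * η Y) :
    g ξ ξ = 1 := by
  rw [metric_reeb_left_eq g φ ξ η hηξ hφξ hcompat, hηξ]

theorem metric_reeb_nablaA_reeb_eq_zero (hηξ : η ξ = 1) (hφξ : φ ξ = 0)
    (hcompat : ∀ X Y : V, g (φ X) (φ Y) = g X Y - η X * η Y)
    (TM : Submodule ℝ V) (nablaA : V → V → V)
    (hKenξ : ∀ X ∈ TM, nablaA X ξ = X - η X • ξ) {X : V} (hX : X ∈ TM) :
    g ξ (nablaA X ξ) = 0 := by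
  rw [hKenξ X hX, map_sub, map_smul, smul_eq_mul,
    metric_reeb_left_eq g φ ξ η hηξ hφξ hcompat, metric_reeb_reeb g φ ξ η hηξ hφξ hcompat,
    mul_one, sub_self]

end AlmostContactMetric

theorem metric_nablaA_eq_metric_nabla {V : Type*} [AddCommGroup V] [Module ℝ V]
    (g : V →ₗ[ℝ] V →ₗ[ℝ] ℝ) (TM TMp : Submodule ℝ V)
    (horth : ∀ x ∈ TM, ∀ y ∈ TMp, g x y = 0) (nablaA nabla h2 : V → V → V)
    (hGauss : ∀ X ∈ TM, ∀ Y ∈ TM, nablaA X Y = nabla X Y + h2 X Y)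
    (hh2nor : ∀ X ∈ TM, ∀ Y ∈ TM, h2 X Y ∈ TMp)
    {W X Y : V} (hW : W ∈ TM) (hX : X ∈ TM) (hY : Y ∈ TM) :
    g W (nablaA X Y) = g W (nabla X Y) := by
  rw [hGauss X hX Y hY, map_add, horth W hW _ (hh2nor X hX Y hY), add_zero]

theorem stmt7_general
    {V : Type*} [AddCommGroup V] [Module ℝ V]
    -- the metric g (symmetric, positive definite) on the ambient manifold M̃
    (g : V →ₗ[ℝ] V →ₗ[ℝ] ℝ)
    -- almost contact structure (φ, ξ, η)
    (φ : V →ₗ[ℝ] V) (ξ : V) (η : V →ₗ[ℝ] ℝ)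
    (hηξ : η ξ = 1)
    (hφξ : φ ξ = 0)
    (hcompat : ∀ X Y : V, g (φ X) (φ Y) = g X Y - η X * η Y)
    -- the submanifold M : tangent bundle TM, normal bundle TMp
    (TM TMp : Submodule ℝ V)
    (horth : ∀ x ∈ TM, ∀ y ∈ TMp, g x y = 0)
    -- ambient connection ∇̃, induced connection ∇, second fundamental form h
    (nablaA nabla h2 : V → V → V)
    (hGauss : ∀ X ∈ TM, ∀ Y ∈ TM, nablaA X Y = nabla X Y + h2 X Y)
    (hh2nor : ∀ X ∈ TM, ∀ Y ∈ TM, h2 X Y ∈ TMp)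
    -- Kenmotsu manifold: ∇̃_X ξ = X − η(X)ξ for X tangent to M
    (hKenξ : ∀ X ∈ TM, nablaA X ξ = X - η X • ξ)
    -- warped product M = N₁ ×_f N₂ : D₁ = TN₁, D₂ = TN₂, Dlnf X = X(ln f)
    (D₁ D₂ : Submodule ℝ V)
    (hD₁ : D₁ ≤ TM) (hD₂ : D₂ ≤ TM)
    (Dlnf : V →ₗ[ℝ] ℝ)
    (hwarp : ∀ X ∈ D₁, ∀ Z ∈ D₂,
      nabla X Z = Dlnf X • Z ∧ nabla Z X = Dlnf X • Z)
    (hξD₂ : ξ ∈ D₂)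
    : ∀ X ∈ D₁, Dlnf X = 0 := by
  intro X hX
  have hXM : X ∈ TM := hD₁ hX
  have hξM : ξ ∈ TM := hD₂ hξD₂
  calc Dlnf X = g ξ (Dlnf X • ξ) := by
        rw [map_smul, smul_eq_mul, metric_reeb_reeb g φ ξ η hηξ hφξ hcompat, mul_one]
    _ = g ξ (nablaA X ξ) := by
        rw [metric_nablaA_eq_metric_nabla g TM TMp horth nablaA nabla h2 hGauss hh2nor
          hξM hXM hξM, (hwarp X hX ξ hξD₂).1]
    _ = 0 := metric_reeb_nablaA_reeb_eq_zero g φ ξ η hηξ hφξ hcompat TM nablaA hKenξ hXM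

/-- there are no nontrivial warped product submanifolds
`N₁ ×_f N₂` of a Kenmotsu manifold with `ξ` tangent to `N₂`:
if `ξ ∈ TN₂` then `f` is constant. -/
theorem stmt7
    {V : Type*} [AddCommGroup V] [Module ℝ V]
    -- the metric g (symmetric, positive definite) on the ambient manifold M̃
    (g : V →ₗ[ℝ] V →ₗ[ℝ] ℝ)
    (hgsym : ∀ X Y : V, g X Y = g Y X)
    (hgpos : ∀ X : V, X ≠ 0 → 0 < g X X)
    -- almost contact structure (φ, ξ, η)
    (φ : V →ₗ[ℝ] V) (ξ : V) (η : V →ₗ[ℝ] ℝ)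
    (hφsq : ∀ X : V, φ (φ X) = X - η X • ξ)
    (hηξ : η ξ = 1)
    (hηφ : ∀ X : V, η (φ X) = 0)
    (hφξ : φ ξ = 0)
    (hcompat : ∀ X Y : V, g (φ X) (φ Y) = g X Y - η X * η Y)
    -- the submanifold M : tangent bundle TM, normal bundle TMp
    (TM TMp : Submodule ℝ V)
    (horth : ∀ x ∈ TM, ∀ y ∈ TMp, g x y = 0)
    -- ambient connection ∇̃, induced connection ∇, second fundamental form h
    (nablaA nabla h2 : V → V → V)
    (hGauss : ∀ X ∈ TM, ∀ Y ∈ TM, nablaA X Y = nabla X Y + h2 X Y)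
    (hnablatan : ∀ X ∈ TM, ∀ Y ∈ TM, nabla X Y ∈ TM)
    (hh2nor : ∀ X ∈ TM, ∀ Y ∈ TM, h2 X Y ∈ TMp)
    (hh2sym : ∀ X Y : V, h2 X Y = h2 Y X)
    -- Kenmotsu manifold: ∇̃_X ξ = X − η(X)ξ for X tangent to M
    (hKenξ : ∀ X ∈ TM, nablaA X ξ = X - η X • ξ)
    -- warped product M = N₁ ×_f N₂ : D₁ = TN₁, D₂ = TN₂, Dlnf X = X(ln f)
    (D₁ D₂ : Submodule ℝ V)
    (hD₁ : D₁ ≤ TM) (hD₂ : D₂ ≤ TM)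
    (hD₁D₂ : ∀ X ∈ D₁, ∀ Z ∈ D₂, g X Z = 0)
    (Dlnf : V →ₗ[ℝ] ℝ)
    (hwarp : ∀ X ∈ D₁, ∀ Z ∈ D₂,
      nabla X Z = Dlnf X • Z ∧ nabla Z X = Dlnf X • Z)
    (hξD₂ : ξ ∈ D₂)
    : ∀ X ∈ D₁, Dlnf X = 0 :=
  stmt7_general g φ ξ η hηξ hφξ hcompat TM TMp horth nablaA nabla h2 hGauss hh2nor hKenξ D₁ D₂ hD₁
    hD₂ Dlnf hwarp hξD₂
end
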